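/- Let S be a monoid, A an S-act without zero elements, and I a set with |I| > 1. Then A ⊔ z₁ ⊔ z₂ is geometrically equivalent to A ⊔ (⊔_{i∈I} z_i), where the z_i are one-point trivial S-acts. -/

import Mathlib

/-- The kernel of a map, as a set of pairs. -/
def actKer {A B : Type} (f : A → B) : Set (A × A) := {p | f p.1 = f p.2}

/-- A homomorphism of left `S`-acts is an `S`-equivariant map. -/
def IsActHom (S : Type) [Monoid S] {A B : Type} [MulAction S A] [MulAction S B]
    (f : A → B) : Prop := ∀ (s : S) (a : A), f (s • a) = s • f a

/-- The free left `S`-act on `n` generators: a coproduct of `n` copies of `S`. -/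
def FreeAct (S : Type) (n : ℕ) : Type := Fin n × S

instance (S : Type) [Monoid S] (n : ℕ) : SMul S (FreeAct S n) :=
  ⟨fun s p => (p.1, s * p.2)⟩

instance (S : Type) [Monoid S] (n : ℕ) : MulAction S (FreeAct S n) where
  one_smul p := show (p.1, 1 * p.2) = p by rw [one_mul]; rfl
  mul_smul s t p := show (p.1, (s * t) * p.2) = (p.1, s * (t * p.2)) by rw [mul_assoc]

/-- A congruence on an `S`-act: an equivalence relation compatible with the action. -/
def IsCongruence (S : Type) [Monoid S] {A : Type} [MulAction S A]
    (T : Set (A × A)) : Prop :=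
  Equivalence (fun a b => (a, b) ∈ T) ∧
    ∀ (s : S) (a b : A), (a, b) ∈ T → (s • a, s • b) ∈ T

/-- The `G`-closure `T''` of a binary relation `T` on a free `S`-act:
the intersection of the kernels of all homomorphisms into `G` whose kernel contains `T`. -/
def actClosure (S : Type) [Monoid S] (G : Type) [MulAction S G] {n : ℕ}
    (T : Set (FreeAct S n × FreeAct S n)) : Set (FreeAct S n × FreeAct S n) :=
  {p | ∀ f : FreeAct S n → G, IsActHom S f → T ⊆ actKer f → f p.1 = f p.2}

/-- `T` is a `G`-closed congruence: an intersection of kernels of a set of homomorphisms. -/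
def GClosed (S : Type) [Monoid S] (G : Type) [MulAction S G] {n : ℕ}
    (T : Set (FreeAct S n × FreeAct S n)) : Prop :=
  ∃ A : Set (FreeAct S n → G), (∀ f ∈ A, IsActHom S f) ∧
    T = {p | ∀ f ∈ A, f p.1 = f p.2}

/-- Geometric equivalence of `S`-acts. -/
def GeomEquiv (S : Type) [Monoid S] (G₁ G₂ : Type) [MulAction S G₁] [MulAction S G₂] : Prop :=
  ∀ (n : ℕ) (T : Set (FreeAct S n × FreeAct S n)),
    actClosure S G₁ T = actClosure S G₂ T

/-- Coproduct (disjoint union) action on `A ⊕ B`. -/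
instance (S : Type) [Monoid S] {A B : Type} [MulAction S A] [MulAction S B] :
    SMul S (A ⊕ B) :=
  ⟨fun s x => match x with
    | Sum.inl a => Sum.inl (s • a)
    | Sum.inr b => Sum.inr (s • b)⟩

instance (S : Type) [Monoid S] {A B : Type} [MulAction S A] [MulAction S B] :
    MulAction S (A ⊕ B) where
  one_smul x := by
    cases x with
    | inl a => show Sum.inl ((1 : S) • a) = _; rw [one_smul]
    | inr b => show Sum.inr ((1 : S) • b) = _; rw [one_smul]
  mul_smul s t x := by
    cases x with
    | inl a => show Sum.inl ((s * t) • a) = Sum.inl (s • t • a); rw [mul_smul]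
    | inr b => show Sum.inr ((s * t) • b) = Sum.inr (s • t • b); rw [mul_smul]

/-- `Copies I A` is the coproduct of `I` copies of the `S`-act `A`. -/
def Copies (I A : Type) : Type := I × A

instance (S : Type) [Monoid S] {I A : Type} [MulAction S A] : SMul S (Copies I A) :=
  ⟨fun s p => (p.1, s • p.2)⟩

instance (S : Type) [Monoid S] {I A : Type} [MulAction S A] : MulAction S (Copies I A) where
  one_smul p := show (p.1, (1 : S) • p.2) = p by rw [one_smul]; rfl
  mul_smul s t p := show (p.1, (s * t) • p.2) = (p.1, s • t • p.2) by rw [mul_smul]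

/-!
Both acts embed into a power of the other, which forces geometric equivalence: a homomorphism
into a power is a family of homomorphisms into the act, so both closures of a relation are cut
out by the same kernels. To separate two points of `A ⊔ Z₁` by a homomorphism into `A ⊔ Z₂`,
where `Z₁`, `Z₂` are trivial acts and `Z₂` has two points, keep `A` fixed and send `Z₁` to `Z₂`
by any map: every map between trivial acts is a homomorphism.
-/

section

variable {S : Type} [Monoid S]

/-- Equivalently, `G₁` embeds into a power of `G₂`. -/
def SeparatedBy (S : Type) [Monoid S] (G₁ G₂ : Type) [MulAction S G₁] [MulAction S G₂] :
    Prop :=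
  ∀ x y : G₁, x ≠ y → ∃ g : G₁ → G₂, IsActHom S g ∧ g x ≠ g y

def IsTrivialAct (S : Type) [Monoid S] (Z : Type) [MulAction S Z] : Prop :=
  ∀ (s : S) (z : Z), s • z = z

section Hom

variable {A B C D : Type} [MulAction S A] [MulAction S B] [MulAction S C] [MulAction S D]

@[simp] lemma sum_smul_inl (s : S) (a : A) : s • (Sum.inl a : A ⊕ B) = Sum.inl (s • a) := rfl

@[simp] lemma sum_smul_inr (s : S) (b : B) : s • (Sum.inr b : A ⊕ B) = Sum.inr (s • b) := rfl

lemma IsActHom.comp {g : B → C} {f : A → B} (hg : IsActHom S g) (hf : IsActHom S f) :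
    IsActHom S (g ∘ f) := fun s a => by
  rw [Function.comp_apply, hf s a, hg s (f a), Function.comp_apply]

lemma IsActHom.sumMap {f : A → C} {g : B → D} (hf : IsActHom S f) (hg : IsActHom S g) :
    IsActHom S (Sum.map f g) := by
  rintro s (a | b)
  · simp [hf s a]
  · simp [hg s b]

lemma IsActHom.id : IsActHom S (id : A → A) := fun _ _ => rfl

lemma isActHom_of_isTrivialAct (hA : IsTrivialAct S A) (hB : IsTrivialAct S B) (f : A → B) :
    IsActHom S f := fun s a => by rw [hA s a, hB s (f a)]

end Hom

section Trivial

variable {Y Z : Type} [MulAction S Y] [MulAction S Z]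

lemma isTrivialAct_punit : IsTrivialAct S PUnit := fun _ _ => Subsingleton.elim _ _

lemma IsTrivialAct.sum (hY : IsTrivialAct S Y) (hZ : IsTrivialAct S Z) :
    IsTrivialAct S (Y ⊕ Z) := by
  rintro s (y | z)
  · simp [hY s y]
  · simp [hZ s z]

lemma IsTrivialAct.copies (I : Type) (hZ : IsTrivialAct S Z) : IsTrivialAct S (Copies I Z) :=
  fun s p => show (p.1, s • p.2) = p by rw [hZ s p.2]; rfl

end Trivial

section Separation

variable {G₁ G₂ : Type} [MulAction S G₁] [MulAction S G₂]

lemma actClosure_subset_of_separatedBy (h : SeparatedBy S G₂ G₁) {n : ℕ}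
    (T : Set (FreeAct S n × FreeAct S n)) : actClosure S G₁ T ⊆ actClosure S G₂ T := by
  intro p hp f hf hT
  by_contra hne
  obtain ⟨g, hg, hgne⟩ := h _ _ hne
  exact hgne (hp (g ∘ f) (hg.comp hf) fun q hq => congrArg g (hT hq))

lemma GeomEquiv.of_separatedBy (h₁₂ : SeparatedBy S G₁ G₂) (h₂₁ : SeparatedBy S G₂ G₁) :
    GeomEquiv S G₁ G₂ := fun _ T =>
  (actClosure_subset_of_separatedBy h₂₁ T).antisymm (actClosure_subset_of_separatedBy h₁₂ T)

variable {A : Type} [MulAction S A]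

lemma separatedBy_of_isTrivialAct (h₁ : IsTrivialAct S G₁) (h₂ : IsTrivialAct S G₂)
    {a b : G₂} (hab : a ≠ b) : SeparatedBy S G₁ G₂ := by
  classical
  intro x y hxy
  refine ⟨fun z => if z = x then a else b, isActHom_of_isTrivialAct h₁ h₂ _, ?_⟩
  simpa [Ne.symm hxy] using hab

lemma SeparatedBy.sum_left (h : SeparatedBy S G₁ G₂) {g₀ : G₁ → G₂} (hg₀ : IsActHom S g₀) :
    SeparatedBy S (A ⊕ G₁) (A ⊕ G₂) := by
  rintro (a | y) (a' | y') hne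
  · exact ⟨Sum.map id g₀, IsActHom.id.sumMap hg₀, by simpa using hne⟩
  · exact ⟨Sum.map id g₀, IsActHom.id.sumMap hg₀, by simp⟩
  · exact ⟨Sum.map id g₀, IsActHom.id.sumMap hg₀, by simp⟩
  · obtain ⟨g, hg, hgne⟩ := h y y' fun h => hne (congrArg Sum.inr h)
    exact ⟨Sum.map id g, IsActHom.id.sumMap hg, by simpa using hgne⟩

lemma separatedBy_sum_of_isTrivialAct (h₁ : IsTrivialAct S G₁) (h₂ : IsTrivialAct S G₂)
    {a b : G₂} (hab : a ≠ b) : SeparatedBy S (A ⊕ G₁) (A ⊕ G₂) :=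
  (separatedBy_of_isTrivialAct h₁ h₂ hab).sum_left
    (isActHom_of_isTrivialAct h₁ h₂ fun _ => a)

end Separation

end

theorem act_plus_two_zeros_geom_equiv_many_zeros_general
    (S : Type) [Monoid S] (A : Type) [MulAction S A]
    (I : Type) (hI : ∃ i j : I, i ≠ j) :
    GeomEquiv S (A ⊕ (PUnit ⊕ PUnit)) (A ⊕ Copies I PUnit) := by
  obtain ⟨i, j, hij⟩ := hI
  have hTwo : IsTrivialAct S (PUnit ⊕ PUnit) := isTrivialAct_punit.sum isTrivialAct_punit
  have hMany : IsTrivialAct S (Copies I PUnit) := isTrivialAct_punit.copies I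
  have hTwo_ne : (Sum.inl PUnit.unit : PUnit ⊕ PUnit) ≠ Sum.inr PUnit.unit := Sum.inl_ne_inr
  have hMany_ne : ((i, PUnit.unit) : Copies I PUnit) ≠ (j, PUnit.unit) :=
    fun h => hij (congrArg Prod.fst h)
  exact GeomEquiv.of_separatedBy (separatedBy_sum_of_isTrivialAct hTwo hMany hMany_ne)
    (separatedBy_sum_of_isTrivialAct hMany hTwo hTwo_ne)

/-- For an `S`-act `A` with no zero element and a set `I` with
`|I| > 1`, the act `A ⊔ z₁ ⊔ z₂` is geometrically equivalent to `A ⊔ (⊔_{i ∈ I} z_i)`. -/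
theorem act_plus_two_zeros_geom_equiv_many_zeros
    (S : Type) [Monoid S] (A : Type) [MulAction S A]
    (hA : ¬ ∃ a : A, ∀ s : S, s • a = a)
    (I : Type) (hI : ∃ i j : I, i ≠ j) :
    GeomEquiv S (A ⊕ (PUnit ⊕ PUnit)) (A ⊕ Copies I PUnit) :=
  act_plus_two_zeros_geom_equiv_many_zeros_general S A I hI
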